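/- Let Q'_F be the boolean FOND problem obtained from a QNP abstraction Q_F by replacing each numeric variable n with proposition (n=0), effects n↑ with deterministic effect ¬(n=0), and effects n↓ with nondeterministic effect (n=0) ∨ ¬(n=0). If no action of Q_F increments any numeric variable (no n↑ effects), then every strong cyclic solution of Q'_F is a terminating solution of Q_F: under the semantics where a variable decremented infinitely often and incremented finitely often eventually becomes zero, every execution of the policy reaches the goal. -/

import Mathlib

inductive NEff
  | inc | dec
deriving DecidableEq

/-- A QNP action: preconditions on boolean variables p and atoms n=0, boolean effects,
and numeric effects n↑ / n↓. -/
structure QAct (PB NV : Type) where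
  preP : PB → Option Bool
  preN : NV → Option Bool      -- condition on the atom n=0
  effP : PB → Option Bool
  effN : NV → Option NEff

/-- Concrete QNP state: boolean values and natural-number values. -/
abbrev QState (PB NV : Type) := (PB → Bool) × (NV → ℕ)

/-- Boolean FOND state: boolean values and truth values of the atoms n=0. -/
abbrev FState (PB NV : Type) := (PB → Bool) × (NV → Bool)

def absQ {PB NV : Type} (σ : QState PB NV) : FState PB NV :=
  (σ.1, fun n => decide (σ.2 n = 0))

def appF {PB NV : Type} (a : QAct PB NV) (β : FState PB NV) : Prop :=
  (∀ p c, a.preP p = some c → β.1 p = c) ∧ (∀ n c, a.preN n = some c → β.2 n = c)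

def appQ {PB NV : Type} (a : QAct PB NV) (σ : QState PB NV) : Prop := appF a (absQ σ)

/-- QNP successor: decrements strictly decrease, increments strictly increase, by
unspecified amounts; untouched variables keep their value. -/
def qsucc {PB NV : Type} (a : QAct PB NV) (σ σ' : QState PB NV) : Prop :=
  (∀ p, σ'.1 p = (a.effP p).getD (σ.1 p)) ∧
  (∀ n, match a.effN n with
    | some NEff.dec => σ'.2 n < σ.2 n
    | some NEff.inc => σ.2 n < σ'.2 n
    | none => σ'.2 n = σ.2 n)

/-- FOND successor in Q'_F: n↓ becomes the nondeterministic effect n=0 | n>0,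
n↑ becomes the deterministic effect n>0. -/
def fsucc {PB NV : Type} (a : QAct PB NV) (β β' : FState PB NV) : Prop :=
  (∀ p, β'.1 p = (a.effP p).getD (β.1 p)) ∧
  (∀ n, match a.effN n with
    | some NEff.dec => True
    | some NEff.inc => β'.2 n = false
    | none => β'.2 n = β.2 n)

def pstep {PB NV : Type} (π : FState PB NV → Option (QAct PB NV))
    (β β' : FState PB NV) : Prop :=
  ∃ a, π β = some a ∧ appF a β ∧ fsucc a β β'

def ReachPi {PB NV : Type} (π : FState PB NV → Option (QAct PB NV))
    (I : FState PB NV → Prop) (β : FState PB NV) : Prop :=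
  ∃ β₀, I β₀ ∧ Relation.ReflTransGen (pstep π) β₀ β

/-- π is a strong cyclic solution of the boolean FOND problem Q'_F: it is closed
(defined and applicable at every reachable non-goal state) and from every reachable
state a goal state is reachable under π. -/
def StrongCyclic {PB NV : Type} (π : FState PB NV → Option (QAct PB NV))
    (I G : FState PB NV → Prop) : Prop :=
  (∀ β, ReachPi π I β → ¬ G β → ∃ a, π β = some a ∧ appF a β) ∧
  (∀ β, ReachPi π I β → ∃ β', Relation.ReflTransGen (pstep π) β β' ∧ G β')

/-! Along a run of π that never reaches the goal, every step is also a step of Q'_F, so every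
visited abstract state is reachable. Without increments the sum of the numeric variables never grows and
drops at every decrement; by well-foundedness of `ℕ` it is eventually constant, so from some
point on no action touches a numeric variable. From then on the nondeterministic effects of
Q'_F are never triggered, the abstract run is the only π-path out of its states, and the goal
state that strong cyclicity promises must lie on the run. -/

open Relation

theorem exists_eq_of_reflTransGen_of_deterministic {α : Type*} {r : α → α → Prop}
    {f : ℕ → α} {N : ℕ} (hdet : ∀ i ≥ N, ∀ c, r (f i) c → c = f (i + 1)) {c : α}
    (hc : ReflTransGen r (f N) c) : ∃ j ≥ N, c = f j := by
  induction hc with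
  | refl => exact ⟨N, le_rfl, rfl⟩
  | tail _ hstep ih =>
    obtain ⟨j, hj, rfl⟩ := ih
    exact ⟨j + 1, by omega, hdet j hj _ hstep⟩

section Numeric

variable {PB NV : Type} {a : QAct PB NV} {σ σ' : QState PB NV}

theorem fsucc_absQ_of_qsucc (h : qsucc a σ σ') : fsucc a (absQ σ) (absQ σ') := by
  refine ⟨h.1, fun n => ?_⟩
  have hn := h.2 n
  split at hn <;> simp_all [absQ]
  omega

theorem fsucc_unique_of_effN_eq_none (hnone : ∀ n, a.effN n = none) {β β₁ β₂ : FState PB NV}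
    (h₁ : fsucc a β β₁) (h₂ : fsucc a β β₂) : β₁ = β₂ := by
  refine Prod.ext (funext fun p => (h₁.1 p).trans (h₂.1 p).symm) (funext fun n => ?_)
  have e₁ := h₁.2 n
  have e₂ := h₂.2 n
  simp only [hnone] at e₁ e₂
  exact e₁.trans e₂.symm

theorem qsucc_le_of_effN_ne_inc (h : qsucc a σ σ') {n : NV} (hn : a.effN n ≠ some .inc) :
    σ'.2 n ≤ σ.2 n := by
  have hσ := h.2 n
  split at hσ <;> simp_all [le_of_lt]

def numTotal [Fintype NV] (σ : QState PB NV) : ℕ := ∑ n, σ.2 n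

variable [Fintype NV]

theorem numTotal_le_of_qsucc (h : qsucc a σ σ') (hno : ∀ n, a.effN n ≠ some .inc) :
    numTotal σ' ≤ numTotal σ :=
  Finset.sum_le_sum fun n _ => qsucc_le_of_effN_ne_inc h (hno n)

theorem effN_eq_none_of_numTotal_eq (h : qsucc a σ σ') (hno : ∀ n, a.effN n ≠ some .inc)
    (htot : numTotal σ' = numTotal σ) (n : NV) : a.effN n = none := by
  match he : a.effN n with
  | none => rfl
  | some .inc => exact absurd he (hno n)
  | some .dec =>
    have hlt : σ'.2 n < σ.2 n := by simpa [he] using h.2 n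
    have : numTotal σ' < numTotal σ :=
      Finset.sum_lt_sum (fun m _ => qsucc_le_of_effN_ne_inc h (hno m)) ⟨n, Finset.mem_univ n, hlt⟩
    omega

end Numeric

theorem stmt15_general {PB NV : Type} [Fintype NV]
    (A : Set (QAct PB NV)) (I G : FState PB NV → Prop)
    (π : FState PB NV → Option (QAct PB NV))
    (hπA : ∀ β a, π β = some a → a ∈ A)
    (hnoinc : ∀ a ∈ A, ∀ n, a.effN n ≠ some NEff.inc)
    (hsc : StrongCyclic π I G) :
    ∀ σ : ℕ → QState PB NV, I (absQ (σ 0)) →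
      (∀ i, (∀ j ≤ i, ¬ G (absQ (σ j))) →
        ∃ a, π (absQ (σ i)) = some a ∧ appQ a (σ i) ∧ qsucc a (σ i) (σ (i+1))) →
      ∃ n, G (absQ (σ n)) := by
  intro σ hI hrun
  by_contra! hG
  choose a hπ happ hq using fun i => hrun i fun j _ => hG j
  have hno (i : ℕ) : ∀ n, (a i).effN n ≠ some .inc := hnoinc _ (hπA _ _ (hπ i))
  have hstep (i : ℕ) : pstep π (absQ (σ i)) (absQ (σ (i + 1))) :=
    ⟨a i, hπ i, happ i, fsucc_absQ_of_qsucc (hq i)⟩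
  obtain ⟨N, hN⟩ := WellFoundedLT.antitone_chain_condition
    (antitone_nat_of_succ_le (f := fun i => numTotal (σ i))
      fun i => numTotal_le_of_qsucc (hq i) (hno i))
  have hdet : ∀ i ≥ N, ∀ c, pstep π (absQ (σ i)) c → c = absQ (σ (i + 1)) := by
    rintro i hi c ⟨b, hb, -, hc⟩
    obtain rfl : b = a i := Option.some_injective _ (hb.symm.trans (hπ i))
    have htot := (hN (i + 1) (by omega)).symm.trans (hN i hi)
    exact fsucc_unique_of_effN_eq_none (effN_eq_none_of_numTotal_eq (hq i) (hno i) htot) hc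
      (fsucc_absQ_of_qsucc (hq i))
  have hreach : ReachPi π I (absQ (σ N)) :=
    ⟨_, hI, (reflTransGen_of_succ_of_le (fun i j => pstep π (absQ (σ i)) (absQ (σ j)))
      (fun i _ => hstep i) (Nat.zero_le N)).lift (fun i => absQ (σ i)) fun _ _ h => h⟩
  obtain ⟨β, hβ, hGβ⟩ := hsc.2 _ hreach
  obtain ⟨j, -, rfl⟩ := exists_eq_of_reflTransGen_of_deterministic hdet hβ
  exact hG j hGβ

/-- If no action of the QNP Q_F increments any numeric variable, then
every strong cyclic solution π of the boolean FOND problem Q'_F is a terminating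
solution of Q_F: every concrete execution of π from an initial state reaches the goal. -/
theorem stmt15 {PB NV : Type} [Fintype PB] [Fintype NV]
    (A : Set (QAct PB NV)) (I G : FState PB NV → Prop)
    (π : FState PB NV → Option (QAct PB NV))
    (hπA : ∀ β a, π β = some a → a ∈ A)
    (hnoinc : ∀ a ∈ A, ∀ n, a.effN n ≠ some NEff.inc)
    (hsc : StrongCyclic π I G) :
    ∀ σ : ℕ → QState PB NV, I (absQ (σ 0)) →
      (∀ i, (∀ j ≤ i, ¬ G (absQ (σ j))) →
        ∃ a, π (absQ (σ i)) = some a ∧ appQ a (σ i) ∧ qsucc a (σ i) (σ (i+1))) →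
      ∃ n, G (absQ (σ n)) :=
  stmt15_general A I G π hπA hnoinc hsc
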